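/- arXiv:2005.01045 — 3 statements merged into one kernel-verified Lean document; each statement's English description precedes it below -/
import Mathlib

section
/- Suppose for every s ∈ S the code C_s is ρ-locally testable with respect to sampling t ⊆ s, and the distribution of t obtained by first sampling s and then t ⊆ s equals the marginal distribution on T. If a word w_0 : V → Σ satisfies Pr_{t∈T}[w_0|_t ∉ C_t] = ε, then E_{s∈S}[dist(w_0|_s, C_s)] ≤ ε/ρ. -/
/-! Averaging the local-testability inequality of each `C_s` over `s ∼ μ` and exchanging the
order of summation turns the two-step distribution `s ∼ μ, t ∼ ν s` into the marginal on `T`,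
so the averaged rejection probability is exactly `ε`. -/

open Finset
open scoped Classical

noncomputable def hamDist {V Γ : Type*} (s : Finset V) (f g : V → Γ) : ℝ :=
  ((s.filter fun v => f v ≠ g v).card : ℝ) / s.card

/-- Codewords are functions on all of `V`; only their coordinates in `s` are compared. -/
noncomputable def distToCode {V Γ : Type*} (s : Finset V) (f : V → Γ)
    (C : Set (V → Γ)) : ℝ :=
  sInf ((fun g => hamDist s f g) '' C)

noncomputable def ind (P : Prop) : ℝ := if P then 1 else 0

section Averaging

variable {ι κ : Type*} (S : Finset ι) (T : Finset κ) (μ : ι → ℝ) (ν : ι → κ → ℝ)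

theorem sum_mul_sum_mul_eq_sum_marginal_mul (g : κ → ℝ) :
    ∑ s ∈ S, μ s * ∑ t ∈ T, ν s t * g t = ∑ t ∈ T, (∑ s ∈ S, μ s * ν s t) * g t := by
  simp_rw [mul_sum, sum_mul, mul_assoc]
  exact sum_comm

theorem sum_mul_le_sum_marginal_mul_div {d : ι → ℝ} {g : κ → ℝ} {ρ : ℝ} (hρ : 0 < ρ)
    (hμ : ∀ s ∈ S, 0 ≤ μ s) (hd : ∀ s ∈ S, ρ * d s ≤ ∑ t ∈ T, ν s t * g t) :
    ∑ s ∈ S, μ s * d s ≤ (∑ t ∈ T, (∑ s ∈ S, μ s * ν s t) * g t) / ρ := by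
  rw [← sum_mul_sum_mul_eq_sum_marginal_mul, le_div_iff₀ hρ, sum_mul]
  refine sum_le_sum fun s hs => ?_
  rw [mul_assoc, mul_comm _ ρ]
  exact mul_le_mul_of_nonneg_left (hd s hs) (hμ s hs)

end Averaging

theorem stmt2_general {V Γ : Type*} (S T : Finset (Finset V))
    (μ : Finset V → ℝ) (ν : Finset V → Finset V → ℝ)
    (Cs : Finset V → Set (V → Γ))
    (Fails : Finset V → (V → Γ) → Prop)
    (ρ ε : ℝ) (hρ : 0 < ρ)
    (hμ0 : ∀ s ∈ S, 0 ≤ μ s)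
    (μT : Finset V → ℝ)
    (hμT : ∀ t ∈ T, μT t = ∑ s ∈ S, μ s * ν s t)
    (hLT : ∀ s ∈ S, ∀ f : V → Γ,
      ρ * distToCode s f (Cs s) ≤ ∑ t ∈ T, ν s t * ind (Fails t f))
    (w₀ : V → Γ)
    (hε : ∑ t ∈ T, μT t * ind (Fails t w₀) = ε) :
    ∑ s ∈ S, μ s * distToCode s w₀ (Cs s) ≤ ε / ρ := by
  have hmarginal : ∑ t ∈ T, (∑ s ∈ S, μ s * ν s t) * ind (Fails t w₀) = ε := by
    rw [← hε]
    exact sum_congr rfl fun t ht => by rw [hμT t ht]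
  simpa only [hmarginal] using
    sum_mul_le_sum_marginal_mul_div S T μ ν hρ hμ0 fun s hs => hLT s hs w₀

/-- Suppose for every `s ∈ S` the code `C_s` is `ρ`-locally testable with respect to
sampling `t ⊆ s` (conditional distribution `ν s`), and the distribution of `t` obtained
by first sampling `s ∼ μ` and then `t ∼ ν s` equals the marginal distribution `μT` on `T`.
If a word `w₀ : V → Γ` satisfies `Pr_{t∈T}[w₀|_t ∉ C_t] = ε`
(where `Fails t f` means `f|_t ∉ C_t`), then `E_{s∈S}[dist(w₀|_s, C_s)] ≤ ε/ρ`. -/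
theorem stmt2 {V Γ : Type*} (S T : Finset (Finset V))
    (μ : Finset V → ℝ) (ν : Finset V → Finset V → ℝ)
    (Cs : Finset V → Set (V → Γ))
    (Fails : Finset V → (V → Γ) → Prop)
    (ρ ε : ℝ) (hρ : 0 < ρ)
    (hμ0 : ∀ s ∈ S, 0 ≤ μ s) (hμ1 : ∑ s ∈ S, μ s = 1)
    (hν0 : ∀ s ∈ S, ∀ t ∈ T, 0 ≤ ν s t)
    (hν1 : ∀ s ∈ S, ∑ t ∈ T, ν s t = 1)
    (hνsupp : ∀ s ∈ S, ∀ t ∈ T, ν s t ≠ 0 → t ⊆ s)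
    (μT : Finset V → ℝ)
    (hμT : ∀ t ∈ T, μT t = ∑ s ∈ S, μ s * ν s t)
    (hLT : ∀ s ∈ S, ∀ f : V → Γ,
      ρ * distToCode s f (Cs s) ≤ ∑ t ∈ T, ν s t * ind (Fails t f))
    (w₀ : V → Γ)
    (hε : ∑ t ∈ T, μT t * ind (Fails t w₀) = ε) :
    ∑ s ∈ S, μ s * distToCode s w₀ (Cs s) ≤ ε / ρ :=
  stmt2_general S T μ ν Cs Fails ρ ε hρ hμ0 μT hμT hLT w₀ hε
end

section
/- Let {f_s}_{s∈S} be an ensemble where f_s ∈ C_s is a closest codeword to w_0|_s, and suppose E_s[dist(w_0|_s, f_s)] ≤ ε/ρ, where dist(w_0|_s, f_s) = E_{k⊆s}[dist(w_0|_k, f_s|_k)] under the Markov chain. If for every k ∈ K the code C_k has relative distance δ, then Pr_{{s_1,s_2}_k ∼ A}[f_{s_1}|_k = f_{s_2}|_k] ≥ 1 − 4ε/(ρδ), where the agreement test A samples k and then s_1, s_2 ⊇ k independently. -/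
/-!
Whenever both `s₁, s₂ ⊇ k` carry codewords and these disagree on `k`, the distance of `C_k`
and the triangle inequality through `w₀|_k` give
`δ ≤ dist(w₀|_k, f_{s₁}|_k) + dist(w₀|_k, f_{s₂}|_k)`. Averaging over the agreement test,
each of the two terms has expectation `E_s[dist(w₀|_s, f_s)] ≤ ε/ρ`, so the test fails with
probability at most `2ε/(ρδ) ≤ 4ε/(ρδ)`.
-/

open Finset
open scoped Classical

lemma hamDist_nonneg {V Γ : Type*} (s : Finset V) (f g : V → Γ) : 0 ≤ hamDist s f g :=
  div_nonneg (Nat.cast_nonneg _) (Nat.cast_nonneg _)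

lemma hamDist_comm {V Γ : Type*} (s : Finset V) (f g : V → Γ) :
    hamDist s f g = hamDist s g f := by
  simp only [hamDist, ne_comm]

lemma hamDist_triangle {V Γ : Type*} (s : Finset V) (f g h : V → Γ) :
    hamDist s f h ≤ hamDist s f g + hamDist s g h := by
  rw [hamDist, hamDist, hamDist, ← add_div]
  gcongr
  have hsub : (s.filter fun v => f v ≠ h v) ⊆
      (s.filter fun v => f v ≠ g v) ∪ (s.filter fun v => g v ≠ h v) := by
    intro v hv
    simp only [mem_filter, mem_union] at hv ⊢
    by_cases hfg : f v = g v
    · exact Or.inr ⟨hv.1, fun hgh => hv.2 (hfg.trans hgh)⟩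
    · exact Or.inl ⟨hv.1, hfg⟩
  exact_mod_cast (card_le_card hsub).trans (card_union_le _ _)

lemma mul_one_sub_ind_le_hamDist_add {V Γ : Type*} (k : Finset V) (δ : ℝ) (w g₁ g₂ : V → Γ)
    (hdist : (¬ ∀ v ∈ k, g₁ v = g₂ v) → δ ≤ hamDist k g₁ g₂) :
    δ * (1 - ind (∀ v ∈ k, g₁ v = g₂ v)) ≤ hamDist k w g₁ + hamDist k w g₂ := by
  by_cases hagree : ∀ v ∈ k, g₁ v = g₂ v
  · simp only [ind, if_pos hagree, sub_self, mul_zero]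
    exact add_nonneg (hamDist_nonneg _ _ _) (hamDist_nonneg _ _ _)
  · simp only [ind, if_neg hagree, sub_zero, mul_one]
    calc δ ≤ hamDist k g₁ g₂ := hdist hagree
      _ ≤ hamDist k g₁ w + hamDist k w g₂ := hamDist_triangle _ _ _ _
      _ = hamDist k w g₁ + hamDist k w g₂ := by rw [hamDist_comm]

section PairSampling

variable {ι σ : Type*} {K : Finset ι} {S : Finset σ} {μ : ι → ℝ} {ν : ι → σ → ℝ}

lemma sum_pair_mul_left (hν1 : ∀ k ∈ K, ∑ s ∈ S, ν k s = 1) (F : ι → σ → ℝ) :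
    ∑ k ∈ K, ∑ s₁ ∈ S, ∑ s₂ ∈ S, μ k * ν k s₁ * ν k s₂ * F k s₁ =
      ∑ k ∈ K, ∑ s ∈ S, μ k * ν k s * F k s := by
  refine sum_congr rfl fun k hk => sum_congr rfl fun s₁ _ => ?_
  calc ∑ s₂ ∈ S, μ k * ν k s₁ * ν k s₂ * F k s₁
      = μ k * ν k s₁ * F k s₁ * ∑ s₂ ∈ S, ν k s₂ := by
        rw [mul_sum]; exact sum_congr rfl fun _ _ => by ring
    _ = μ k * ν k s₁ * F k s₁ := by rw [hν1 k hk, mul_one]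

lemma sum_pair_mul_right (hν1 : ∀ k ∈ K, ∑ s ∈ S, ν k s = 1) (F : ι → σ → ℝ) :
    ∑ k ∈ K, ∑ s₁ ∈ S, ∑ s₂ ∈ S, μ k * ν k s₁ * ν k s₂ * F k s₂ =
      ∑ k ∈ K, ∑ s ∈ S, μ k * ν k s * F k s := by
  rw [← sum_pair_mul_left hν1 F]
  refine sum_congr rfl fun k _ => ?_
  rw [sum_comm]
  exact sum_congr rfl fun _ _ => sum_congr rfl fun _ _ => by ring

lemma sum_pair_weights (hμ1 : ∑ k ∈ K, μ k = 1) (hν1 : ∀ k ∈ K, ∑ s ∈ S, ν k s = 1) :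
    ∑ k ∈ K, ∑ s₁ ∈ S, ∑ s₂ ∈ S, μ k * ν k s₁ * ν k s₂ = 1 := by
  have h := sum_pair_mul_left (μ := μ) hν1 fun _ _ => 1
  simp only [mul_one] at h
  rw [h, ← hμ1]
  refine sum_congr rfl fun k hk => ?_
  rw [← mul_sum, hν1 k hk, mul_one]

lemma one_sub_sum_pair_mul_eq (hμ1 : ∑ k ∈ K, μ k = 1) (hν1 : ∀ k ∈ K, ∑ s ∈ S, ν k s = 1)
    (G : ι → σ → σ → ℝ) :
    1 - ∑ k ∈ K, ∑ s₁ ∈ S, ∑ s₂ ∈ S, μ k * ν k s₁ * ν k s₂ * G k s₁ s₂ =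
      ∑ k ∈ K, ∑ s₁ ∈ S, ∑ s₂ ∈ S, μ k * ν k s₁ * ν k s₂ * (1 - G k s₁ s₂) := by
  simp only [mul_sub, mul_one, sum_sub_distrib, sum_pair_weights hμ1 hν1]

lemma mul_one_sub_sum_pair_le_two_mul_sum (hμ0 : ∀ k ∈ K, 0 ≤ μ k) (hμ1 : ∑ k ∈ K, μ k = 1)
    (hν0 : ∀ k ∈ K, ∀ s ∈ S, 0 ≤ ν k s) (hν1 : ∀ k ∈ K, ∑ s ∈ S, ν k s = 1)
    {δ : ℝ} {G : ι → σ → σ → ℝ} (d : ι → σ → ℝ)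
    (hG : ∀ k ∈ K, ∀ s₁ ∈ S, ∀ s₂ ∈ S, ν k s₁ ≠ 0 → ν k s₂ ≠ 0 →
      δ * (1 - G k s₁ s₂) ≤ d k s₁ + d k s₂) :
    δ * (1 - ∑ k ∈ K, ∑ s₁ ∈ S, ∑ s₂ ∈ S, μ k * ν k s₁ * ν k s₂ * G k s₁ s₂) ≤
      2 * ∑ k ∈ K, ∑ s ∈ S, μ k * ν k s * d k s := by
  have pointwise : ∀ k ∈ K, ∀ s₁ ∈ S, ∀ s₂ ∈ S,
      μ k * ν k s₁ * ν k s₂ * (δ * (1 - G k s₁ s₂)) ≤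
        μ k * ν k s₁ * ν k s₂ * (d k s₁ + d k s₂) := by
    intro k hk s₁ hs₁ s₂ hs₂
    rcases eq_or_ne (ν k s₁) 0 with h₁ | h₁
    · simp [h₁]
    rcases eq_or_ne (ν k s₂) 0 with h₂ | h₂
    · simp [h₂]
    exact mul_le_mul_of_nonneg_left (hG k hk s₁ hs₁ s₂ hs₂ h₁ h₂)
      (mul_nonneg (mul_nonneg (hμ0 k hk) (hν0 k hk s₁ hs₁)) (hν0 k hk s₂ hs₂))
  calc δ * (1 - ∑ k ∈ K, ∑ s₁ ∈ S, ∑ s₂ ∈ S, μ k * ν k s₁ * ν k s₂ * G k s₁ s₂)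
      = ∑ k ∈ K, ∑ s₁ ∈ S, ∑ s₂ ∈ S, μ k * ν k s₁ * ν k s₂ * (δ * (1 - G k s₁ s₂)) := by
        rw [one_sub_sum_pair_mul_eq hμ1 hν1]
        simp only [mul_sum, mul_left_comm δ]
    _ ≤ ∑ k ∈ K, ∑ s₁ ∈ S, ∑ s₂ ∈ S, μ k * ν k s₁ * ν k s₂ * (d k s₁ + d k s₂) :=
        sum_le_sum fun k hk => sum_le_sum fun s₁ hs₁ => sum_le_sum fun s₂ hs₂ =>
          pointwise k hk s₁ hs₁ s₂ hs₂
    _ = 2 * ∑ k ∈ K, ∑ s ∈ S, μ k * ν k s * d k s := by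
        simp only [mul_add, sum_add_distrib, sum_pair_mul_left hν1, sum_pair_mul_right hν1]
        ring

end PairSampling

/-- Let `{f_s}` be an ensemble of local codewords (`f_s ∈ C_s`, globally represented,
so `f_s|_k ∈ C_k` whenever `k ⊆ s`), and suppose
`E_s[dist(w₀|_s, f_s)] = E_{k,s}[dist(w₀|_k, f_s|_k)] ≤ ε/ρ`, the expectation taken
over the Markov chain sampling `k ∈ K` (weights `μK`) and then `s ⊇ k` (weights `ν k`).
If every `C_k` has relative distance `δ`, then the agreement test — sampling `k` and then
two conditionally independent `s₁, s₂ ⊇ k` — passes with probability at least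
`1 − 4ε/(ρδ)`. -/
theorem stmt3 {V Γ : Type*} (K S : Finset (Finset V))
    (μK : Finset V → ℝ) (ν : Finset V → Finset V → ℝ)
    (Ck : Finset V → Set (V → Γ))
    (f : Finset V → V → Γ) (w₀ : V → Γ)
    (ρ δ ε : ℝ) (hρ : 0 < ρ) (hδ : 0 < δ) (hε : 0 ≤ ε)
    (hμ0 : ∀ k ∈ K, 0 ≤ μK k) (hμ1 : ∑ k ∈ K, μK k = 1)
    (hν0 : ∀ k ∈ K, ∀ s ∈ S, 0 ≤ ν k s)
    (hν1 : ∀ k ∈ K, ∑ s ∈ S, ν k s = 1)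
    (hνsupp : ∀ k ∈ K, ∀ s ∈ S, ν k s ≠ 0 → k ⊆ s)
    -- the local codewords restrict to codewords of `C_k`
    (hmem : ∀ k ∈ K, ∀ s ∈ S, k ⊆ s → f s ∈ Ck k)
    -- `C_k` has relative distance `δ`
    (hdist : ∀ k ∈ K, ∀ g h : V → Γ, g ∈ Ck k → h ∈ Ck k →
      (¬ ∀ v ∈ k, g v = h v) → δ ≤ hamDist k g h)
    -- `E_{k,s}[dist(w₀|_k, f_s|_k)] ≤ ε/ρ`
    (hexp : ∑ k ∈ K, ∑ s ∈ S, μK k * ν k s * hamDist k w₀ (f s) ≤ ε / ρ) :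
    1 - 4 * ε / (ρ * δ) ≤
      ∑ k ∈ K, ∑ s₁ ∈ S, ∑ s₂ ∈ S,
        μK k * ν k s₁ * ν k s₂ * ind (∀ v ∈ k, f s₁ v = f s₂ v) := by
  set P := ∑ k ∈ K, ∑ s₁ ∈ S, ∑ s₂ ∈ S,
    μK k * ν k s₁ * ν k s₂ * ind (∀ v ∈ k, f s₁ v = f s₂ v)
  have hfail : δ * (1 - P) ≤ 2 * (ε / ρ) := by
    refine (mul_one_sub_sum_pair_le_two_mul_sum hμ0 hμ1 hν0 hν1
      (fun k s => hamDist k w₀ (f s)) fun k hk s₁ hs₁ s₂ hs₂ h₁ h₂ => ?_).trans (by linarith)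
    exact mul_one_sub_ind_le_hamDist_add k δ w₀ _ _ <| hdist k hk _ _
      (hmem k hk s₁ hs₁ (hνsupp k hk s₁ hs₁ h₁)) (hmem k hk s₂ hs₂ (hνsupp k hk s₂ hs₂ h₂))
  calc 1 - 4 * ε / (ρ * δ) ≤ 1 - 2 * (ε / ρ) / δ := by
        rw [mul_div_assoc, mul_div_assoc, div_div]
        linarith [div_nonneg hε (mul_pos hρ hδ).le]
    _ ≤ P := by
        have := (le_div_iff₀ hδ).2 (by linarith : (1 - P) * δ ≤ 2 * (ε / ρ))
        linarith
end

section
/- Let (V, T, K, S) satisfy: the containment graph between K and T is a λ-sampler (with the Markov chain edge distribution), and let w_1 : V → Σ and an ensemble {f_s} be such that Pr_{k⊆s}[w_1|_k = f_s|_k] ≥ 1 − 8ε/(ρδα), with 8ε/(ρδα) ≤ 1/2. Suppose further that whenever w_1|_t ∉ C_t for t ∈ T, every k ∈ K containing t satisfies w_1|_k ≠ f_s|_k for all s ⊇ k. If λ ≤ ρδα/64 then Pr_{t∈T}[w_1|_t ∉ C_t] ≤ ε/2. -/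
/-!
Call `k ∈ K` bad if `w₁|_k` disagrees with `f_s|_k` for every `s ⊇ k`. Bad `k` never contribute
to the agreement probability, so the bad set `B` has mass `m ≤ 8ε/(ρδα) ≤ 1/2`. A failing `t` sends
all of its mass to `B`, i.e. its conditional probability of landing in `B` is `1 > m + θ` for every
`θ < 1 - m`; the sampler property then bounds the failing mass by `λ m / θ²`, and letting
`θ → 1 - m ≥ 1/2` gives `4 λ m ≤ 4 · (ρδα/64) · 8ε/(ρδα) = ε/2`.
-/

open Finset
open scoped Classical

open Filter Topology

theorem ind_nonneg (P : Prop) : 0 ≤ ind P := by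
  unfold ind; split_ifs <;> norm_num

theorem ind_le_one (P : Prop) : ind P ≤ 1 := by
  unfold ind; split_ifs <;> norm_num

theorem le_mul_ind_gt_mul {p c : ℝ} (hp : 0 ≤ p) (hc : c < 1) : p ≤ p * ind (p > p * c) := by
  rcases hp.eq_or_lt with rfl | hp
  · simp
  · rw [ind, if_pos (by nlinarith), mul_one]

theorem sum_mul_ind_le_sum_mul_ind_gt {τ : Type*} (T : Finset τ) {p q : τ → ℝ} (F : τ → Prop)
    {c : ℝ} (hp : ∀ t ∈ T, 0 ≤ p t) (hc : c < 1) (hF : ∀ t ∈ T, F t → q t = p t) :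
    ∑ t ∈ T, p t * ind (F t) ≤ ∑ t ∈ T, p t * ind (q t > p t * c) := by
  refine sum_le_sum fun t ht => ?_
  by_cases hFt : F t
  · rw [ind, if_pos hFt, mul_one, hF t ht hFt]
    exact le_mul_ind_gt_mul (hp t ht) hc
  · rw [ind, if_neg hFt, mul_zero]
    exact mul_nonneg (hp t ht) (ind_nonneg _)

theorem sum_mul_ind_add_mass_le_one {τ κ σ : Type*} {T : Finset τ} {K : Finset κ}
    {S : Finset σ} {μ : τ → κ → σ → ℝ} (hμ0 : ∀ t k s, 0 ≤ μ t k s)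
    (hμ1 : ∑ t ∈ T, ∑ k ∈ K, ∑ s ∈ S, μ t k s = 1) {B : Finset κ} (hBK : B ⊆ K)
    (P : κ → σ → Prop) (hB : ∀ t ∈ T, ∀ k ∈ B, ∀ s ∈ S, μ t k s ≠ 0 → ¬ P k s) :
    ∑ k ∈ K, ∑ s ∈ S, (∑ t ∈ T, μ t k s) * ind (P k s) +
      ∑ t ∈ T, ∑ k ∈ B, ∑ s ∈ S, μ t k s ≤ 1 := by
  have hpoint : ∀ t ∈ T, ∀ k ∈ K, ∀ s ∈ S,
      μ t k s * ind (P k s) + (if k ∈ B then μ t k s else 0) ≤ μ t k s := by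
    intro t ht k _ s hs
    split_ifs with hkB
    · by_cases h0 : μ t k s = 0
      · simp [h0]
      · rw [ind, if_neg (hB t ht k hkB s hs h0)]
        simp
    · simpa using mul_le_of_le_one_right (hμ0 t k s) (ind_le_one _)
  calc _ = ∑ t ∈ T, ∑ k ∈ K, ∑ s ∈ S,
        (μ t k s * ind (P k s) + if k ∈ B then μ t k s else 0) := by
        simp only [sum_add_distrib, sum_mul, sum_ite_irrel, sum_const_zero, sum_ite_mem,
          inter_eq_right.2 hBK]
        congr 1
        exact (sum_congr rfl fun _ _ => sum_comm).trans sum_comm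
    _ ≤ 1 := hμ1 ▸ sum_le_sum fun t ht => sum_le_sum fun k hk => sum_le_sum
        fun s hs => hpoint t ht k hk s hs

theorem le_div_sq_mul_of_forall_sub {x a b c : ℝ} (hb : 0 < b)
    (h : ∀ η, 0 < η → η < b → x ≤ a / (b - η) ^ 2 * c) : x ≤ a / b ^ 2 * c := by
  have hcont : ContinuousAt (fun η : ℝ => a / (b - η) ^ 2 * c) 0 := by
    fun_prop (disch := simpa using hb.ne')
  have htend : Tendsto (fun η : ℝ => a / (b - η) ^ 2 * c) (𝓝[>] 0) (𝓝 (a / b ^ 2 * c)) := by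
    simpa using hcont.continuousWithinAt.tendsto
  refine ge_of_tendsto htend ?_
  filter_upwards [Ioo_mem_nhdsGT hb] with η hη using h η hη.1 hη.2

theorem stmt7_general {V Γ : Type*} (T K S : Finset (Finset V))
    (μ : Finset V → Finset V → Finset V → ℝ)
    (Fails : Finset V → (V → Γ) → Prop)
    (f : Finset V → V → Γ) (w₁ : V → Γ)
    (lam ε ρ δ α : ℝ) (hρ : 0 < ρ) (hδ : 0 < δ) (hα : 0 < α)
    (hlam : 0 ≤ lam) (hlamle : lam ≤ ρ * δ * α / 64)
    (hμ0 : ∀ t k s, 0 ≤ μ t k s)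
    (hμ1 : ∑ t ∈ T, ∑ k ∈ K, ∑ s ∈ S, μ t k s = 1)
    (hμsupp : ∀ t k s, μ t k s ≠ 0 → t ∈ T ∧ k ∈ K ∧ s ∈ S ∧ t ⊆ k ∧ k ⊆ s)
    -- the containment graph of `K` vs `T` is a `λ`-sampler
    (hsampler : ∀ B ⊆ K, ∀ θ : ℝ, 0 < θ →
      ∑ t ∈ T, (∑ k ∈ K, ∑ s ∈ S, μ t k s) *
          ind ((∑ k ∈ B, ∑ s ∈ S, μ t k s) >
            (∑ k ∈ K, ∑ s ∈ S, μ t k s) *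
              ((∑ t' ∈ T, ∑ k ∈ B, ∑ s ∈ S, μ t' k s) + θ))
        ≤ lam / θ ^ 2 * (∑ t' ∈ T, ∑ k ∈ B, ∑ s ∈ S, μ t' k s))
    -- `Pr_{k ⊆ s}[w₁|_k = f_s|_k] ≥ 1 − 8ε/(ρδα)`
    (hagree : 1 - 8 * ε / (ρ * δ * α) ≤
      ∑ k ∈ K, ∑ s ∈ S, (∑ t ∈ T, μ t k s) * ind (∀ v ∈ k, w₁ v = f s v))
    (hhalf : 8 * ε / (ρ * δ * α) ≤ 1 / 2)
    -- a failing `t` has all of the `k ⊇ t` disagreeing with every `f_s`, `s ⊇ k`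
    (hbad : ∀ t ∈ T, Fails t w₁ → ∀ k ∈ K, t ⊆ k → ∀ s ∈ S, k ⊆ s →
      ¬ ∀ v ∈ k, w₁ v = f s v) :
    ∑ t ∈ T, (∑ k ∈ K, ∑ s ∈ S, μ t k s) * ind (Fails t w₁) ≤ ε / 2 := by
  set B := K.filter fun k => ∀ s ∈ S, k ⊆ s → ¬ ∀ v ∈ k, w₁ v = f s v
  have hBK : B ⊆ K := filter_subset _ K
  set m := ∑ t ∈ T, ∑ k ∈ B, ∑ s ∈ S, μ t k s
  have hm0 : 0 ≤ m := sum_nonneg fun t _ => sum_nonneg fun k _ => sum_nonneg fun s _ => hμ0 t k s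
  have hmq : m ≤ 8 * ε / (ρ * δ * α) := by
    have := sum_mul_ind_add_mass_le_one hμ0 hμ1 hBK (fun k s => ∀ v ∈ k, w₁ v = f s v)
      fun t _ k hk s hs hμ => (mem_filter.1 hk).2 s hs (hμsupp t k s hμ).2.2.2.2
    linarith
  have hfail : ∀ t ∈ T, Fails t w₁ →
      ∑ k ∈ B, ∑ s ∈ S, μ t k s = ∑ k ∈ K, ∑ s ∈ S, μ t k s := fun t ht hF =>
    sum_subset hBK fun k hk hkB => sum_eq_zero fun s _ => by_contra fun hμ =>
      hkB (mem_filter.2 ⟨hk, hbad t ht hF k hk (hμsupp t k s hμ).2.2.2.1⟩)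
  have hη : ∀ η, 0 < η → η < 1 - m →
      ∑ t ∈ T, (∑ k ∈ K, ∑ s ∈ S, μ t k s) * ind (Fails t w₁) ≤ lam / (1 - m - η) ^ 2 * m :=
    fun η hη hηm => (sum_mul_ind_le_sum_mul_ind_gt T _
      (fun t _ => sum_nonneg fun k _ => sum_nonneg fun s _ => hμ0 t k s) (by linarith) hfail).trans
      (hsampler B hBK _ (by linarith))
  calc _ ≤ lam / (1 - m) ^ 2 * m := le_div_sq_mul_of_forall_sub (by linarith) hη
    _ ≤ 4 * lam * m := by
        have hquarter : 1 / 4 ≤ (1 - m) ^ 2 := by nlinarith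
        gcongr
        rw [div_le_iff₀ (by linarith)]
        nlinarith [mul_le_mul_of_nonneg_left hquarter hlam]
    _ ≤ 4 * (ρ * δ * α / 64) * (8 * ε / (ρ * δ * α)) := by gcongr
    _ = ε / 2 := by field_simp; ring

/-- Let `(V, T, K, S)` carry a joint distribution `μ` sampling `(t, k, s)` with
`t ⊆ k ⊆ s` (the Markov chain marginal), such that the containment graph between `K`
and `T` (with the induced `(t,k)` edge distribution) is a `λ`-sampler.  Let `w₁ : V → Γ`
and an ensemble `{f_s}` satisfy `Pr_{k⊆s}[w₁|_k = f_s|_k] ≥ 1 − 8ε/(ρδα)`, with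
`8ε/(ρδα) ≤ 1/2`.  Suppose further that whenever `w₁|_t ∉ C_t` (predicate `Fails t w₁`)
for `t ∈ T`, every `k ∈ K` containing `t` satisfies `w₁|_k ≠ f_s|_k` for all `s ∈ S`
with `s ⊇ k`.  If `λ ≤ ρδα/64` then `Pr_{t∈T}[w₁|_t ∉ C_t] ≤ ε/2`. -/
theorem stmt7 {V Γ : Type*} (T K S : Finset (Finset V))
    (μ : Finset V → Finset V → Finset V → ℝ)
    (Fails : Finset V → (V → Γ) → Prop)
    (f : Finset V → V → Γ) (w₁ : V → Γ)
    (lam ε ρ δ α : ℝ) (hε : 0 ≤ ε) (hρ : 0 < ρ) (hδ : 0 < δ) (hα : 0 < α)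
    (hlam : 0 ≤ lam) (hlamle : lam ≤ ρ * δ * α / 64)
    (hμ0 : ∀ t k s, 0 ≤ μ t k s)
    (hμ1 : ∑ t ∈ T, ∑ k ∈ K, ∑ s ∈ S, μ t k s = 1)
    (hμsupp : ∀ t k s, μ t k s ≠ 0 → t ∈ T ∧ k ∈ K ∧ s ∈ S ∧ t ⊆ k ∧ k ⊆ s)
    -- the containment graph of `K` vs `T` is a `λ`-sampler
    (hsampler : ∀ B ⊆ K, ∀ θ : ℝ, 0 < θ →
      ∑ t ∈ T, (∑ k ∈ K, ∑ s ∈ S, μ t k s) *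
          ind ((∑ k ∈ B, ∑ s ∈ S, μ t k s) >
            (∑ k ∈ K, ∑ s ∈ S, μ t k s) *
              ((∑ t' ∈ T, ∑ k ∈ B, ∑ s ∈ S, μ t' k s) + θ))
        ≤ lam / θ ^ 2 * (∑ t' ∈ T, ∑ k ∈ B, ∑ s ∈ S, μ t' k s))
    -- `Pr_{k ⊆ s}[w₁|_k = f_s|_k] ≥ 1 − 8ε/(ρδα)`
    (hagree : 1 - 8 * ε / (ρ * δ * α) ≤
      ∑ k ∈ K, ∑ s ∈ S, (∑ t ∈ T, μ t k s) * ind (∀ v ∈ k, w₁ v = f s v))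
    (hhalf : 8 * ε / (ρ * δ * α) ≤ 1 / 2)
    -- a failing `t` has all of the `k ⊇ t` disagreeing with every `f_s`, `s ⊇ k`
    (hbad : ∀ t ∈ T, Fails t w₁ → ∀ k ∈ K, t ⊆ k → ∀ s ∈ S, k ⊆ s →
      ¬ ∀ v ∈ k, w₁ v = f s v) :
    ∑ t ∈ T, (∑ k ∈ K, ∑ s ∈ S, μ t k s) * ind (Fails t w₁) ≤ ε / 2 :=
  stmt7_general T K S μ Fails f w₁ lam ε ρ δ α hρ hδ hα hlam hlamle hμ0 hμ1 hμsupp hsampler hagree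
    hhalf hbad
end
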